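/- For every double category C, the globularily generated piece γC satisfies the universal property: for any globularily generated double category D and any double functor F : D → C, there exists a unique double functor F̃ : D → γC with ε_C ∘ F̃ = F, where ε_C : γC → C is the inclusion; this characterizes γC up to isomorphism of double categories. -/
import Mathlib



/-- Data of a (pseudo)bicategory: 0-cells, 1-cells, 2-cells, identities,
vertical and horizontal composition of 2-cells. -/
structure PreBicat : Type 1 where
  Obj : Type
  Hom : Obj → Obj → Type
  Two : ∀ {a b : Obj}, Hom a b → Hom a b → Type
  id1 : ∀ a : Obj, Hom a a
  comp1 : ∀ {a b c : Obj}, Hom a b → Hom b c → Hom a c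
  id2 : ∀ {a b : Obj} (f : Hom a b), Two f f
  vcomp2 : ∀ {a b : Obj} {f g h : Hom a b}, Two f g → Two g h → Two f h
  hcomp2 : ∀ {a b c : Obj} {f g : Hom a b} {f' g' : Hom b c},
      Two f g → Two f' g' → Two (comp1 f f') (comp1 g g')

/-- Data of a (pseudo) double category: objects, vertical morphisms (forming a
category), horizontal morphisms, 2-morphisms with their boundaries, vertical
and horizontal identities and compositions of 2-morphisms. -/
structure PreDouble : Type 1 where
  Obj : Type
  Ver : Obj → Obj → Type
  Hor : Obj → Obj → Type
  Cell : ∀ {a b c d : Obj}, Hor a b → Hor c d → Ver a c → Ver b d → Type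
  vid : ∀ a, Ver a a
  vcomp : ∀ {a b c}, Ver a b → Ver b c → Ver a c
  hid : ∀ a, Hor a a
  hcomp : ∀ {a b c}, Hor a b → Hor b c → Hor a c
  cid : ∀ {a b} (h : Hor a b), Cell h h (vid a) (vid b)
  hcid : ∀ {a c} (u : Ver a c), Cell (hid a) (hid c) u u
  cvcomp : ∀ {a b c d e f' : Obj} {h : Hor a b} {k : Hor c d} {l : Hor e f'}
      {u : Ver a c} {u' : Ver c e} {v : Ver b d} {v' : Ver d f'},
      Cell h k u v → Cell k l u' v' → Cell h l (vcomp u u') (vcomp v v')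
  chcomp : ∀ {a b c a' b' c' : Obj} {h : Hor a b} {h' : Hor b c} {k : Hor a' b'}
      {k' : Hor b' c'} {u : Ver a a'} {v : Ver b b'} {w : Ver c c'},
      Cell h k u v → Cell h' k' v w → Cell (hcomp h h') (hcomp k k') u w
  vid_comp : ∀ {a b} (u : Ver a b), vcomp (vid a) u = u
  vcomp_vid : ∀ {a b} (u : Ver a b), vcomp u (vid b) = u
  vcomp_assoc : ∀ {a b c d} (u : Ver a b) (v : Ver b c) (w : Ver c d),
      vcomp (vcomp u v) w = vcomp u (vcomp v w)

/-- The horizontal bicategory of a double category: 0-cells are objects,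
1-cells are horizontal morphisms, 2-cells are globular 2-morphisms. -/
def horizontalize (C : PreDouble) : PreBicat where
  Obj := C.Obj
  Hom := C.Hor
  Two h k := C.Cell h k (C.vid _) (C.vid _)
  id1 := C.hid
  comp1 := C.hcomp
  id2 := C.cid
  vcomp2 α β := cast (by rw [C.vid_comp, C.vid_comp]) (C.cvcomp α β)
  hcomp2 α β := C.chcomp α β

/-- Transport of 1-cells along equalities of 0-cells. -/
def transportHom (B : PreBicat) {a b c d : B.Obj} (u : a = c) (v : b = d)
    (k : B.Hom c d) : B.Hom a b := by subst u; subst v; exact k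

/-- The trivial double category on a bicategory: discrete vertical category. -/
def trivialDouble (B : PreBicat) : PreDouble where
  Obj := B.Obj
  Ver a b := PLift (a = b)
  Hor := B.Hom
  Cell h k u v := B.Two h (transportHom B u.down v.down k)
  vid _ := ⟨rfl⟩
  vcomp u v := ⟨u.down.trans v.down⟩
  hid := B.id1
  hcomp := B.comp1
  cid h := B.id2 h
  hcid u := by obtain ⟨e⟩ := u; subst e; exact B.id2 _
  cvcomp {a b c d e f'} {h k l} {u u' v v'} α β := by
    obtain ⟨eu⟩ := u; obtain ⟨eu'⟩ := u'; obtain ⟨ev⟩ := v; obtain ⟨ev'⟩ := v'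
    subst eu; subst eu'; subst ev; subst ev'
    exact B.vcomp2 α β
  chcomp {a b c a' b' c'} {h h' k k'} {u v w} α β := by
    obtain ⟨eu⟩ := u; obtain ⟨ev⟩ := v; obtain ⟨ew⟩ := w
    subst eu; subst ev; subst ew
    exact B.hcomp2 α β
  vid_comp u := by obtain ⟨e⟩ := u; subst e; rfl
  vcomp_vid u := by obtain ⟨e⟩ := u; subst e; rfl
  vcomp_assoc u v w := by
    obtain ⟨e⟩ := u; obtain ⟨e'⟩ := v; obtain ⟨e''⟩ := w
    subst e; subst e'; subst e''; rfl

/-- A (strict) double functor between double categories. -/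
structure DoubleFunctor (C D : PreDouble) : Type where
  obj : C.Obj → D.Obj
  ver : ∀ {a b}, C.Ver a b → D.Ver (obj a) (obj b)
  hor : ∀ {a b}, C.Hor a b → D.Hor (obj a) (obj b)
  cell : ∀ {a b c d} {h : C.Hor a b} {k : C.Hor c d} {u : C.Ver a c} {v : C.Ver b d},
      C.Cell h k u v → D.Cell (hor h) (hor k) (ver u) (ver v)
  ver_id : ∀ a, ver (C.vid a) = D.vid (obj a)
  ver_comp : ∀ {a b c} (u : C.Ver a b) (v : C.Ver b c),
      ver (C.vcomp u v) = D.vcomp (ver u) (ver v)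
  hor_id : ∀ a, hor (C.hid a) = D.hid (obj a)
  hor_comp : ∀ {a b c} (h : C.Hor a b) (k : C.Hor b c),
      hor (C.hcomp h k) = D.hcomp (hor h) (hor k)
  cell_cid : ∀ {a b} (h : C.Hor a b), HEq (cell (C.cid h)) (D.cid (hor h))
  cell_hcid : ∀ {a c} (u : C.Ver a c), HEq (cell (C.hcid u)) (D.hcid (ver u))
  cell_vcomp : ∀ {a b c d e f' : C.Obj} {h : C.Hor a b} {k : C.Hor c d}
      {l : C.Hor e f'} {u : C.Ver a c} {u' : C.Ver c e} {v : C.Ver b d}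
      {v' : C.Ver d f'} (α : C.Cell h k u v) (β : C.Cell k l u' v'),
      HEq (cell (C.cvcomp α β)) (D.cvcomp (cell α) (cell β))
  cell_hcomp : ∀ {a b c a' b' c' : C.Obj} {h : C.Hor a b} {h' : C.Hor b c}
      {k : C.Hor a' b'} {k' : C.Hor b' c'} {u : C.Ver a a'} {v : C.Ver b b'}
      {w : C.Ver c c'} (α : C.Cell h k u v) (β : C.Cell h' k' v w),
      HEq (cell (C.chcomp α β)) (D.chcomp (cell α) (cell β))

/-- The identity double functor. -/
def idDouble (C : PreDouble) : DoubleFunctor C C where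
  obj := id
  ver := fun u => u
  hor := fun h => h
  cell := fun α => α
  ver_id _ := rfl
  ver_comp _ _ := rfl
  hor_id _ := rfl
  hor_comp _ _ := rfl
  cell_cid _ := HEq.rfl
  cell_hcid _ := HEq.rfl
  cell_vcomp _ _ := HEq.rfl
  cell_hcomp _ _ := HEq.rfl

/-- `K` is the composite of the double functors `F` and `G`. -/
def IsCompDouble {C D E : PreDouble} (F : DoubleFunctor C D)
    (G : DoubleFunctor D E) (K : DoubleFunctor C E) : Prop :=
  (∀ a, K.obj a = G.obj (F.obj a)) ∧
  (∀ {a b} (u : C.Ver a b), HEq (K.ver u) (G.ver (F.ver u))) ∧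
  (∀ {a b} (h : C.Hor a b), HEq (K.hor h) (G.hor (F.hor h))) ∧
  (∀ {a b c d} {h : C.Hor a b} {k : C.Hor c d} {u : C.Ver a c} {v : C.Ver b d}
    (α : C.Cell h k u v), HEq (K.cell α) (G.cell (F.cell α)))

/-- A (strict) pseudofunctor between bicategories. -/
structure BicatFunctor (B B' : PreBicat) : Type where
  obj : B.Obj → B'.Obj
  map1 : ∀ {a b}, B.Hom a b → B'.Hom (obj a) (obj b)
  map2 : ∀ {a b} {f g : B.Hom a b}, B.Two f g → B'.Two (map1 f) (map1 g)
  map1_id : ∀ a, map1 (B.id1 a) = B'.id1 (obj a)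
  map1_comp : ∀ {a b c} (f : B.Hom a b) (g : B.Hom b c),
      map1 (B.comp1 f g) = B'.comp1 (map1 f) (map1 g)
  map2_id : ∀ {a b} (f : B.Hom a b), map2 (B.id2 f) = B'.id2 (map1 f)
  map2_vcomp : ∀ {a b} {f g h : B.Hom a b} (α : B.Two f g) (β : B.Two g h),
      map2 (B.vcomp2 α β) = B'.vcomp2 (map2 α) (map2 β)
  map2_hcomp : ∀ {a b c} {f g : B.Hom a b} {f' g' : B.Hom b c}
      (α : B.Two f g) (β : B.Two f' g'),
      HEq (map2 (B.hcomp2 α β)) (B'.hcomp2 (map2 α) (map2 β))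

/-- The identity pseudofunctor. -/
def idBicat (B : PreBicat) : BicatFunctor B B where
  obj := id
  map1 := fun f => f
  map2 := fun α => α
  map1_id _ := rfl
  map1_comp _ _ := rfl
  map2_id _ := rfl
  map2_vcomp _ _ := rfl
  map2_hcomp _ _ := HEq.rfl

/-- `K` is the composite of the pseudofunctors `F` and `G`. -/
def IsCompBicat {B₁ B₂ B₃ : PreBicat} (F : BicatFunctor B₁ B₂)
    (G : BicatFunctor B₂ B₃) (K : BicatFunctor B₁ B₃) : Prop :=
  (∀ a, K.obj a = G.obj (F.obj a)) ∧
  (∀ {a b} (f : B₁.Hom a b), HEq (K.map1 f) (G.map1 (F.map1 f))) ∧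
  (∀ {a b} {f g : B₁.Hom a b} (α : B₁.Two f g), HEq (K.map2 α) (G.map2 (F.map2 α)))

/-- A sub-double category of `C`, given by subsets of objects, vertical
morphisms, horizontal morphisms and 2-morphisms closed under all the
structure of `C`. -/
structure SubDouble (C : PreDouble) : Type where
  objs : Set C.Obj
  vers : ∀ {a b : C.Obj}, Set (C.Ver a b)
  hors : ∀ {a b : C.Obj}, Set (C.Hor a b)
  cells : ∀ {a b c d : C.Obj} {h : C.Hor a b} {k : C.Hor c d} {u : C.Ver a c}
      {v : C.Ver b d}, Set (C.Cell h k u v)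
  ver_src : ∀ {a b} {u : C.Ver a b}, u ∈ vers → a ∈ objs
  ver_tgt : ∀ {a b} {u : C.Ver a b}, u ∈ vers → b ∈ objs
  hor_src : ∀ {a b} {h : C.Hor a b}, h ∈ hors → a ∈ objs
  hor_tgt : ∀ {a b} {h : C.Hor a b}, h ∈ hors → b ∈ objs
  cell_hor_src : ∀ {a b c d} {h : C.Hor a b} {k : C.Hor c d} {u : C.Ver a c}
      {v : C.Ver b d} {α : C.Cell h k u v}, α ∈ cells → h ∈ hors
  cell_hor_tgt : ∀ {a b c d} {h : C.Hor a b} {k : C.Hor c d} {u : C.Ver a c}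
      {v : C.Ver b d} {α : C.Cell h k u v}, α ∈ cells → k ∈ hors
  cell_ver_src : ∀ {a b c d} {h : C.Hor a b} {k : C.Hor c d} {u : C.Ver a c}
      {v : C.Ver b d} {α : C.Cell h k u v}, α ∈ cells → u ∈ vers
  cell_ver_tgt : ∀ {a b c d} {h : C.Hor a b} {k : C.Hor c d} {u : C.Ver a c}
      {v : C.Ver b d} {α : C.Cell h k u v}, α ∈ cells → v ∈ vers
  vid_mem : ∀ {a}, a ∈ objs → C.vid a ∈ vers
  vcomp_mem : ∀ {a b c} {u : C.Ver a b} {v : C.Ver b c},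
      u ∈ vers → v ∈ vers → C.vcomp u v ∈ vers
  hid_mem : ∀ {a}, a ∈ objs → C.hid a ∈ hors
  hcomp_mem : ∀ {a b c} {h : C.Hor a b} {k : C.Hor b c},
      h ∈ hors → k ∈ hors → C.hcomp h k ∈ hors
  cid_mem : ∀ {a b} {h : C.Hor a b}, h ∈ hors → C.cid h ∈ cells
  hcid_mem : ∀ {a c} {u : C.Ver a c}, u ∈ vers → C.hcid u ∈ cells
  cvcomp_mem : ∀ {a b c d e f' : C.Obj} {h : C.Hor a b} {k : C.Hor c d}
      {l : C.Hor e f'} {u : C.Ver a c} {u' : C.Ver c e} {v : C.Ver b d}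
      {v' : C.Ver d f'} {α : C.Cell h k u v} {β : C.Cell k l u' v'},
      α ∈ cells → β ∈ cells → C.cvcomp α β ∈ cells
  chcomp_mem : ∀ {a b c a' b' c' : C.Obj} {h : C.Hor a b} {h' : C.Hor b c}
      {k : C.Hor a' b'} {k' : C.Hor b' c'} {u : C.Ver a a'} {v : C.Ver b b'}
      {w : C.Ver c c'} {α : C.Cell h k u v} {β : C.Cell h' k' v w},
      α ∈ cells → β ∈ cells → C.chcomp α β ∈ cells

/-- A sub-double category is complete if it contains all objects, vertical
morphisms, and horizontal morphisms. -/
def SubDouble.Complete {C : PreDouble} (D : SubDouble C) : Prop :=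
  (∀ a, a ∈ D.objs) ∧ (∀ {a b : C.Obj} (u : C.Ver a b), u ∈ D.vers) ∧
    (∀ {a b : C.Obj} (h : C.Hor a b), h ∈ D.hors)

/-- A sub-double category contains all globular 2-morphisms of `C`. -/
def SubDouble.ContainsGlob {C : PreDouble} (D : SubDouble C) : Prop :=
  ∀ {a b : C.Obj} (h k : C.Hor a b) (α : C.Cell h k (C.vid a) (C.vid b)), α ∈ D.cells

/-- The full (improper) sub-double category of `C`, i.e. `C` itself. -/
def fullSub (C : PreDouble) : SubDouble C where
  objs := Set.univ
  vers := Set.univ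
  hors := Set.univ
  cells := Set.univ
  ver_src _ := trivial
  ver_tgt _ := trivial
  hor_src _ := trivial
  hor_tgt _ := trivial
  cell_hor_src _ := trivial
  cell_hor_tgt _ := trivial
  cell_ver_src _ := trivial
  cell_ver_tgt _ := trivial
  vid_mem _ := trivial
  vcomp_mem _ _ := trivial
  hid_mem _ := trivial
  hcomp_mem _ _ := trivial
  cid_mem _ := trivial
  hcid_mem _ := trivial
  cvcomp_mem _ _ := trivial
  chcomp_mem _ _ := trivial

/-- The globularily generated piece of `C`, as a sub-double category: the
intersection of all complete sub-double categories containing every globular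
2-morphism. -/
def gammaSub (C : PreDouble) : SubDouble C where
  objs := Set.univ
  vers := Set.univ
  hors := Set.univ
  cells := fun {_ _ _ _ _ _ _ _} =>
    {α | ∀ D : SubDouble C, D.Complete → D.ContainsGlob → α ∈ D.cells}
  ver_src _ := trivial
  ver_tgt _ := trivial
  hor_src _ := trivial
  hor_tgt _ := trivial
  cell_hor_src _ := trivial
  cell_hor_tgt _ := trivial
  cell_ver_src _ := trivial
  cell_ver_tgt _ := trivial
  vid_mem _ := trivial
  vcomp_mem _ _ := trivial
  hid_mem _ := trivial
  hcomp_mem _ _ := trivial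
  cid_mem _ := fun D _ hG => hG _ _ _
  hcid_mem _ := fun D hC _ => D.hcid_mem (hC.2.1 _)
  cvcomp_mem hα hβ := fun D hC hG => D.cvcomp_mem (hα D hC hG) (hβ D hC hG)
  chcomp_mem hα hβ := fun D hC hG => D.chcomp_mem (hα D hC hG) (hβ D hC hG)

/-- The decorated horizontalization of a sub-double category of `C`: its
category of objects and vertical morphisms, its horizontal morphisms, and its
globular 2-morphisms. -/
def decHsub (C : PreDouble) (D : SubDouble C) :
    Set C.Obj × (∀ a b : C.Obj, Set (C.Ver a b)) × (∀ a b : C.Obj, Set (C.Hor a b)) ×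
      (∀ (a b : C.Obj) (h k : C.Hor a b), Set (C.Cell h k (C.vid a) (C.vid b))) :=
  (D.objs, fun _ _ => D.vers, fun _ _ => D.hors, fun _ _ _ _ => D.cells)

/-- A double category is globularily generated if it is generated by its
globular 2-morphisms, i.e. its globularily generated piece is all of it. -/
def GloballyGenerated (C : PreDouble) : Prop :=
  ∀ {a b c d : C.Obj} {h : C.Hor a b} {k : C.Hor c d} {u : C.Ver a c}
    {v : C.Ver b d} (α : C.Cell h k u v), α ∈ (gammaSub C).cells

/-- The globularily generated piece of `C`, as a double category in its own
right. -/
def gammaPiece (C : PreDouble) : PreDouble where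
  Obj := C.Obj
  Ver := C.Ver
  Hor := C.Hor
  Cell h k u v := {α : C.Cell h k u v // α ∈ (gammaSub C).cells}
  vid := C.vid
  vcomp := C.vcomp
  hid := C.hid
  hcomp := C.hcomp
  cid h := ⟨C.cid h, (gammaSub C).cid_mem trivial⟩
  hcid u := ⟨C.hcid u, (gammaSub C).hcid_mem trivial⟩
  cvcomp α β := ⟨C.cvcomp α.1 β.1, (gammaSub C).cvcomp_mem α.2 β.2⟩
  chcomp α β := ⟨C.chcomp α.1 β.1, (gammaSub C).chcomp_mem α.2 β.2⟩
  vid_comp := C.vid_comp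
  vcomp_vid := C.vcomp_vid
  vcomp_assoc := C.vcomp_assoc

/-- The inclusion of the globularily generated piece into `C`. -/
def inclusionGamma (C : PreDouble) : DoubleFunctor (gammaPiece C) C where
  obj := id
  ver := fun u => u
  hor := fun h => h
  cell := Subtype.val
  ver_id _ := rfl
  ver_comp _ _ := rfl
  hor_id _ := rfl
  hor_comp _ _ := rfl
  cell_cid _ := HEq.rfl
  cell_hcid _ := HEq.rfl
  cell_vcomp _ _ := HEq.rfl
  cell_hcomp _ _ := HEq.rfl

/-- A 2-morphism is globular if its source and target vertical morphisms are
identities. -/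
def IsGlobular (C : PreDouble) {a b c d : C.Obj} {h : C.Hor a b}
    {k : C.Hor c d} {u : C.Ver a c} {v : C.Ver b d} (_ : C.Cell h k u v) : Prop :=
  ∃ (_ : a = c) (_ : b = d), HEq u (C.vid a) ∧ HEq v (C.vid b)

/-- A 2-morphism is a horizontal identity of a vertical morphism. -/
def IsHorId (C : PreDouble) {a b c d : C.Obj} {h : C.Hor a b}
    {k : C.Hor c d} {u : C.Ver a c} {v : C.Ver b d} (α : C.Cell h k u v) : Prop :=
  ∃ (_ : b = a) (_ : d = c),
    HEq h (C.hid a) ∧ HEq k (C.hid c) ∧ HEq v u ∧ HEq α (C.hcid u)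

/-- A family of 2-morphisms of `C`. -/
abbrev CellFam (C : PreDouble) :=
  ∀ {a b c d : C.Obj} {h : C.Hor a b} {k : C.Hor c d} {u : C.Ver a c}
    {v : C.Ver b d}, C.Cell h k u v → Prop

/-- Closure of a family of 2-morphisms under vertical composition and
identities of the category of morphisms `C₁`. -/
inductive VertGen (C : PreDouble) (X : CellFam C) : CellFam C
  | of {a b c d : C.Obj} {h : C.Hor a b} {k : C.Hor c d} {u : C.Ver a c}
      {v : C.Ver b d} {α : C.Cell h k u v} : X α → VertGen C X α
  | id {a b : C.Obj} (h : C.Hor a b) : VertGen C X (C.cid h)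
  | comp {a b c d e f' : C.Obj} {h : C.Hor a b} {k : C.Hor c d} {l : C.Hor e f'}
      {u : C.Ver a c} {u' : C.Ver c e} {v : C.Ver b d} {v' : C.Ver d f'}
      {α : C.Cell h k u v} {β : C.Cell k l u' v'} :
      VertGen C X α → VertGen C X β → VertGen C X (C.cvcomp α β)

/-- Closure of a family of 2-morphisms under horizontal composition. -/
inductive HorGen (C : PreDouble) (X : CellFam C) : CellFam C
  | of {a b c d : C.Obj} {h : C.Hor a b} {k : C.Hor c d} {u : C.Ver a c}
      {v : C.Ver b d} {α : C.Cell h k u v} : X α → HorGen C X α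
  | comp {a b c a' b' c' : C.Obj} {h : C.Hor a b} {h' : C.Hor b c}
      {k : C.Hor a' b'} {k' : C.Hor b' c'} {u : C.Ver a a'} {v : C.Ver b b'}
      {w : C.Ver c c'} {α : C.Cell h k u v} {β : C.Cell h' k' v w} :
      HorGen C X α → HorGen C X β → HorGen C X (C.chcomp α β)

/-- The auxiliary horizontal families: `Hfam C 0` is `H₁`, the union of the
globular 2-morphisms and the horizontal identities, and `Hfam C (n+1)` is
`H_{n+2}`, the horizontal composites of morphisms of the vertical category
`V_{n+1} = Vfam C n`. -/
def Hfam (C : PreDouble) : ℕ → CellFam C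
  | 0 => fun α => IsGlobular C α ∨ IsHorId C α
  | n + 1 => HorGen C (VertGen C (Hfam C n))

/-- The vertical filtration: `Vfam C n` is the `(n+1)`-st vertical category
`V_{n+1}`, the subcategory of `C₁` generated by `Hfam C n`. -/
def Vfam (C : PreDouble) (n : ℕ) : CellFam C := VertGen C (Hfam C n)

/-- Strictness of a double category, at the level of horizontal composition. -/
def IsStrict (C : PreDouble) : Prop :=
  (∀ {a b} (h : C.Hor a b), C.hcomp (C.hid a) h = h) ∧
  (∀ {a b} (h : C.Hor a b), C.hcomp h (C.hid b) = h) ∧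
  (∀ {a b c d} (h : C.Hor a b) (k : C.Hor b c) (l : C.Hor c d),
    C.hcomp (C.hcomp h k) l = C.hcomp h (C.hcomp k l)) ∧
  (∀ {a b c d a' b' c' d' : C.Obj} {h : C.Hor a b} {h' : C.Hor b c}
    {h'' : C.Hor c d} {k : C.Hor a' b'} {k' : C.Hor b' c'} {k'' : C.Hor c' d'}
    {u : C.Ver a a'} {v : C.Ver b b'} {w : C.Ver c c'} {x : C.Ver d d'}
    (α : C.Cell h k u v) (β : C.Cell h' k' v w) (γ' : C.Cell h'' k'' w x),
    HEq (C.chcomp (C.chcomp α β) γ') (C.chcomp α (C.chcomp β γ'))) ∧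
  (∀ {a b a' b' : C.Obj} {h : C.Hor a b} {k : C.Hor a' b'} {u : C.Ver a a'}
    {v : C.Ver b b'} (α : C.Cell h k u v),
    HEq (C.chcomp (C.hcid u) α) α ∧ HEq (C.chcomp α (C.hcid v)) α)

/-- A double natural transformation between double functors. -/
structure DoubleNat {C D : PreDouble} (F G : DoubleFunctor C D) : Type where
  ver : ∀ a, D.Ver (F.obj a) (G.obj a)
  cell : ∀ {a b} (h : C.Hor a b), D.Cell (F.hor h) (G.hor h) (ver a) (ver b)
  natural : ∀ {a b c d} {h : C.Hor a b} {k : C.Hor c d} {u : C.Ver a c}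
      {v : C.Ver b d} (α : C.Cell h k u v),
      HEq (D.cvcomp (F.cell α) (cell k)) (D.cvcomp (cell h) (G.cell α))

/-- A double natural transformation is globularily generated if all its
2-morphism components lie in the globularily generated piece. -/
def IsGGNat {C D : PreDouble} {F G : DoubleFunctor C D}
    (η : DoubleNat F G) : Prop :=
  ∀ {a b} (h : C.Hor a b), η.cell h ∈ (gammaSub D).cells

/-- `η` is the whiskering of `η'` with the double functor `E`. -/
def IsWhisker {X Y D : PreDouble} (E : DoubleFunctor X Y)
    {F' G' : DoubleFunctor D X} {F G : DoubleFunctor D Y}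
    (η' : DoubleNat F' G') (η : DoubleNat F G) : Prop :=
  (∀ a, HEq (η.ver a) (E.ver (η'.ver a))) ∧
  (∀ {a b} (h : D.Hor a b), HEq (η.cell h) (E.cell (η'.cell h)))

/-- Extensionality for double functors. -/
theorem DF_ext' {C D : PreDouble} {F G : DoubleFunctor C D}
    (ho : ∀ a, F.obj a = G.obj a)
    (hv : ∀ {a b} (u : C.Ver a b), HEq (F.ver u) (G.ver u))
    (hh : ∀ {a b} (h : C.Hor a b), HEq (F.hor h) (G.hor h))
    (hc : ∀ {a b c d} {h : C.Hor a b} {k : C.Hor c d} {u : C.Ver a c}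
      {v : C.Ver b d} (α : C.Cell h k u v), HEq (F.cell α) (G.cell α)) : F = G := by
  obtain ⟨fo, fv, fh, fc, _, _, _, _, _, _, _, _⟩ := F
  obtain ⟨go, gv, gh, gc, _, _, _, _, _, _, _, _⟩ := G
  obtain rfl : fo = go := funext ho
  obtain rfl : @fv = @gv := by
    funext a b u; exact eq_of_heq (hv u)
  obtain rfl : @fh = @gh := by
    funext a b h; exact eq_of_heq (hh h)
  obtain rfl : @fc = @gc := by
    funext a b c d h k u v α; exact eq_of_heq (hc α)
  rfl

theorem cellCongr {D E : PreDouble} (G : DoubleFunctor D E) {a b c d : D.Obj}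
    {h h' : D.Hor a b} {k k' : D.Hor c d} {u u' : D.Ver a c} {v v' : D.Ver b d}
    (eh : h = h') (ek : k = k') (eu : u = u') (ev : v = v')
    {α : D.Cell h k u v} {β : D.Cell h' k' u' v'} (e : HEq α β) :
    HEq (G.cell α) (G.cell β) := by
  subst eh; subst ek; subst eu; subst ev; cases e; rfl

/-- Composite of double functors. -/
def compDouble {C D E : PreDouble} (F : DoubleFunctor C D) (G : DoubleFunctor D E) :
    DoubleFunctor C E where
  obj a := G.obj (F.obj a)
  ver u := G.ver (F.ver u)
  hor h := G.hor (F.hor h)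
  cell α := G.cell (F.cell α)
  ver_id a := (congrArg G.ver (F.ver_id a)).trans (G.ver_id _)
  ver_comp u v := (congrArg G.ver (F.ver_comp u v)).trans (G.ver_comp _ _)
  hor_id a := (congrArg G.hor (F.hor_id a)).trans (G.hor_id _)
  hor_comp h k := (congrArg G.hor (F.hor_comp h k)).trans (G.hor_comp _ _)
  cell_cid h := (cellCongr G rfl rfl (F.ver_id _) (F.ver_id _) (F.cell_cid h)).trans (G.cell_cid _)
  cell_hcid u := (cellCongr G (F.hor_id _) (F.hor_id _) rfl rfl (F.cell_hcid u)).trans (G.cell_hcid _)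
  cell_vcomp α β := (cellCongr G rfl rfl (F.ver_comp _ _) (F.ver_comp _ _) (F.cell_vcomp α β)).trans (G.cell_vcomp _ _)
  cell_hcomp α β := (cellCongr G (F.hor_comp _ _) (F.hor_comp _ _) rfl rfl (F.cell_hcomp α β)).trans (G.cell_hcomp _ _)

theorem isComp_comp {C D E : PreDouble} (F : DoubleFunctor C D) (G : DoubleFunctor D E) :
    IsCompDouble F G (compDouble F G) :=
  ⟨fun _ => rfl, fun {_ _} _ => HEq.rfl, fun {_ _} _ => HEq.rfl,
    fun {_ _ _ _ _ _ _ _} _ => HEq.rfl⟩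

theorem memTrans {C : PreDouble} {a b c d : C.Obj} {h h' : C.Hor a b}
    {k k' : C.Hor c d} {u u' : C.Ver a c} {v v' : C.Ver b d}
    (eu : u = u') (ev : v = v') (eh : h = h') (ek : k = k')
    {α : C.Cell h k u v} {β : C.Cell h' k' u' v'} (e : HEq α β) :
    β ∈ (gammaSub C).cells → α ∈ (gammaSub C).cells := by
  subst eu; subst ev; subst eh; subst ek; cases e; exact id

theorem memOfVid {C : PreDouble} {a b : C.Obj} {u : C.Ver a a} {v : C.Ver b b}
    (eu : u = C.vid a) (ev : v = C.vid b) {h k : C.Hor a b} (α : C.Cell h k u v) :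
    α ∈ (gammaSub C).cells := by
  subst eu; subst ev; exact fun _ _ hG => hG _ _ _

/-- Pullback of the globularily generated sub-double category along a functor. -/
def pullSub {D C : PreDouble} (F : DoubleFunctor D C) : SubDouble D where
  objs := Set.univ
  vers := fun {_ _} => Set.univ
  hors := fun {_ _} => Set.univ
  cells := fun {_ _ _ _ _ _ _ _} => {α | F.cell α ∈ (gammaSub C).cells}
  ver_src _ := trivial
  ver_tgt _ := trivial
  hor_src _ := trivial
  hor_tgt _ := trivial
  cell_hor_src _ := trivial
  cell_hor_tgt _ := trivial
  cell_ver_src _ := trivial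
  cell_ver_tgt _ := trivial
  vid_mem _ := trivial
  vcomp_mem _ _ := trivial
  hid_mem _ := trivial
  hcomp_mem _ _ := trivial
  cid_mem {a b h} _ :=
    memTrans (F.ver_id a) (F.ver_id b) rfl rfl (F.cell_cid h) ((gammaSub C).cid_mem trivial)
  hcid_mem {a c u} _ :=
    memTrans rfl rfl (F.hor_id a) (F.hor_id c) (F.cell_hcid u) ((gammaSub C).hcid_mem trivial)
  cvcomp_mem hα hβ :=
    memTrans (F.ver_comp _ _) (F.ver_comp _ _) rfl rfl (F.cell_vcomp _ _)
      ((gammaSub C).cvcomp_mem hα hβ)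
  chcomp_mem hα hβ :=
    memTrans rfl rfl (F.hor_comp _ _) (F.hor_comp _ _) (F.cell_hcomp _ _)
      ((gammaSub C).chcomp_mem hα hβ)

theorem keyMem {D C : PreDouble} (hD : GloballyGenerated D) (F : DoubleFunctor D C)
    {a b c d : D.Obj} {h : D.Hor a b} {k : D.Hor c d} {u : D.Ver a c} {v : D.Ver b d}
    (α : D.Cell h k u v) : F.cell α ∈ (gammaSub C).cells :=
  hD α (pullSub F) ⟨fun _ => trivial, fun {_ _} _ => trivial, fun {_ _} _ => trivial⟩
    (fun _ _ β => memOfVid (F.ver_id _) (F.ver_id _) (F.cell β))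

theorem sHEq' {C : PreDouble} {a b c d a' b' c' d' : C.Obj}
    (ea : a = a') (eb : b = b') (ec : c = c') (ed : d = d')
    {h : C.Hor a b} {h' : C.Hor a' b'} {k : C.Hor c d} {k' : C.Hor c' d'}
    {u : C.Ver a c} {u' : C.Ver a' c'} {v : C.Ver b d} {v' : C.Ver b' d'}
    (eh : HEq h h') (ek : HEq k k') (eu : HEq u u') (ev : HEq v v')
    {x : (gammaPiece C).Cell h k u v} {y : (gammaPiece C).Cell h' k' u' v'}
    (e : HEq x.1 y.1) : HEq x y := by
  subst ea; subst eb; subst ec; subst ed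
  cases eh; cases ek; cases eu; cases ev
  exact heq_of_eq (Subtype.ext (eq_of_heq e))

/-- The lift of a double functor from a globularily generated double category. -/
def liftGamma {D C : PreDouble} (hD : GloballyGenerated D) (F : DoubleFunctor D C) :
    DoubleFunctor D (gammaPiece C) where
  obj := F.obj
  ver := F.ver
  hor := F.hor
  cell α := ⟨F.cell α, keyMem hD F α⟩
  ver_id := F.ver_id
  ver_comp := F.ver_comp
  hor_id := F.hor_id
  hor_comp := F.hor_comp
  cell_cid h := sHEq' rfl rfl rfl rfl HEq.rfl HEq.rfl
    (heq_of_eq (F.ver_id _)) (heq_of_eq (F.ver_id _)) (F.cell_cid h)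
  cell_hcid u := sHEq' rfl rfl rfl rfl
    (heq_of_eq (F.hor_id _)) (heq_of_eq (F.hor_id _)) HEq.rfl HEq.rfl (F.cell_hcid u)
  cell_vcomp α β := sHEq' rfl rfl rfl rfl HEq.rfl HEq.rfl
    (heq_of_eq (F.ver_comp _ _)) (heq_of_eq (F.ver_comp _ _)) (F.cell_vcomp α β)
  cell_hcomp α β := sHEq' rfl rfl rfl rfl
    (heq_of_eq (F.hor_comp _ _)) (heq_of_eq (F.hor_comp _ _)) HEq.rfl HEq.rfl
    (F.cell_hcomp α β)

/-- Part 1: the universal property of the globularily generated piece. -/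
theorem gammaUP (C : PreDouble) : ∀ D : PreDouble, GloballyGenerated D →
    ∀ F : DoubleFunctor D C,
    ∃! Ft : DoubleFunctor D (gammaPiece C), IsCompDouble Ft (inclusionGamma C) F := by
  intro D hD F
  refine ⟨liftGamma hD F,
    ⟨fun _ => rfl, fun {_ _} _ => HEq.rfl, fun {_ _} _ => HEq.rfl,
      fun {_ _ _ _ _ _ _ _} _ => HEq.rfl⟩, ?_⟩
  rintro Ft' ⟨ho, hv, hh, hc⟩
  refine DF_ext' (fun a => (ho a).symm) (fun u => (hv u).symm) (fun h => (hh h).symm) ?_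
  intro a b c d h k u v α
  exact sHEq' (ho a).symm (ho b).symm (ho c).symm (ho d).symm
    (hh h).symm (hh k).symm (hv u).symm (hv v).symm (hc α).symm

/-- Pushforward: turning a sub-double category of `γC` into one of `C`. -/
def pushSub (C : PreDouble) (D' : SubDouble (gammaPiece C)) (hc : D'.Complete) :
    SubDouble C where
  objs := Set.univ
  vers := fun {_ _} => Set.univ
  hors := fun {_ _} => Set.univ
  cells := fun {a b c d h k u v} =>
    {β | ∃ p : β ∈ (gammaSub C).cells,
      (⟨β, p⟩ : (gammaPiece C).Cell h k u v) ∈ D'.cells}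
  ver_src _ := trivial
  ver_tgt _ := trivial
  hor_src _ := trivial
  hor_tgt _ := trivial
  cell_hor_src _ := trivial
  cell_hor_tgt _ := trivial
  cell_ver_src _ := trivial
  cell_ver_tgt _ := trivial
  vid_mem _ := trivial
  vcomp_mem _ _ := trivial
  hid_mem _ := trivial
  hcomp_mem _ _ := trivial
  cid_mem {a b h} _ := ⟨(gammaSub C).cid_mem trivial, D'.cid_mem (hc.2.2 h)⟩
  hcid_mem {a c u} _ := ⟨(gammaSub C).hcid_mem trivial, D'.hcid_mem (hc.2.1 u)⟩
  cvcomp_mem := fun ⟨p₁, h₁⟩ ⟨p₂, h₂⟩ =>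
    ⟨(gammaSub C).cvcomp_mem p₁ p₂, D'.cvcomp_mem h₁ h₂⟩
  chcomp_mem := fun ⟨p₁, h₁⟩ ⟨p₂, h₂⟩ =>
    ⟨(gammaSub C).chcomp_mem p₁ p₂, D'.chcomp_mem h₁ h₂⟩

/-- The globularily generated piece is itself globularily generated. -/
theorem gammaPiece_gg (C : PreDouble) : GloballyGenerated (gammaPiece C) := by
  intro a b c d h k u v α D' hcD hgD
  obtain ⟨p, hp⟩ := α.2 (pushSub C D' hcD)
    ⟨fun _ => trivial, fun {_ _} _ => trivial, fun {_ _} _ => trivial⟩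
    (fun h k β => ⟨fun _ _ hG => hG _ _ _, hgD _ _ ⟨β, fun _ _ hG => hG _ _ _⟩⟩)
  exact hp

/-- For every double category `C`, the globularily generated
piece `γC` satisfies the universal property: for every globularily generated
double category `D` and double functor `F : D → C` there is a unique
`F̃ : D → γC` with `ε_C ∘ F̃ = F`; and this property characterizes `γC` up to
isomorphism of double categories. -/
theorem gammaPiece_universal_property (C : PreDouble) :
    (∀ D : PreDouble, GloballyGenerated D → ∀ F : DoubleFunctor D C,
      ∃! Ft : DoubleFunctor D (gammaPiece C),
        IsCompDouble Ft (inclusionGamma C) F) ∧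
    (∀ (G : PreDouble) (ι : DoubleFunctor G C), GloballyGenerated G →
      (∀ D : PreDouble, GloballyGenerated D → ∀ F : DoubleFunctor D C,
        ∃! Ft : DoubleFunctor D G, IsCompDouble Ft ι F) →
      ∃ (e : DoubleFunctor G (gammaPiece C))
        (e' : DoubleFunctor (gammaPiece C) G),
        IsCompDouble e e' (idDouble G) ∧
        IsCompDouble e' e (idDouble (gammaPiece C))) := by
  constructor
  · exact gammaUP C
  · intro G ι hG hUniv
    obtain ⟨e, he, -⟩ := gammaUP C G hG ι
    obtain ⟨e', he', -⟩ := hUniv (gammaPiece C) (gammaPiece_gg C) (inclusionGamma C)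
    refine ⟨e, e', ?_, ?_⟩
    · obtain ⟨Ft0, -, hu⟩ := hUniv G hG ι
      have h1 : idDouble G = Ft0 := hu _
        ⟨fun _ => rfl, fun {_ _} _ => HEq.rfl, fun {_ _} _ => HEq.rfl,
          fun {_ _ _ _ _ _ _ _} _ => HEq.rfl⟩
      have h2 : compDouble e e' = Ft0 := hu _
        ⟨fun a => (he.1 a).trans (he'.1 (e.obj a)),
          fun {_ _} u => (he.2.1 u).trans (he'.2.1 (e.ver u)),
          fun {_ _} h => (he.2.2.1 h).trans (he'.2.2.1 (e.hor h)),
          fun {_ _ _ _ _ _ _ _} α => (he.2.2.2 α).trans (he'.2.2.2 (e.cell α))⟩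
      have h3 : compDouble e e' = idDouble G := h2.trans h1.symm
      rw [← h3]
      exact isComp_comp e e'
    · obtain ⟨Ft1, -, hu⟩ := gammaUP C (gammaPiece C) (gammaPiece_gg C) (inclusionGamma C)
      have h1 : idDouble (gammaPiece C) = Ft1 := hu _
        ⟨fun _ => rfl, fun {_ _} _ => HEq.rfl, fun {_ _} _ => HEq.rfl,
          fun {_ _ _ _ _ _ _ _} _ => HEq.rfl⟩
      have h2 : compDouble e' e = Ft1 := hu _
        ⟨fun a => (he'.1 a).trans (he.1 (e'.obj a)),
          fun {_ _} u => (he'.2.1 u).trans (he.2.1 (e'.ver u)),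
          fun {_ _} h => (he'.2.2.1 h).trans (he.2.2.1 (e'.hor h)),
          fun {_ _ _ _ _ _ _ _} α => (he'.2.2.2 α).trans (he.2.2.2 (e'.cell α))⟩
      have h3 : compDouble e' e = idDouble (gammaPiece C) := h2.trans h1.symm
      rw [← h3]
      exact isComp_comp e' e
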